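/- arXiv:1612.00648 — 4 statements merged into one kernel-verified Lean document; each statement's English description precedes it below -/
import Mathlib

section
/- Let G = K_{n_1,...,n_t} be the complete t-partite graph on n = n_1+...+n_t vertices (t ≥ 2). Then the spectrum of its distance Laplacian matrix 𝓛(G) = Tr(G) − 𝓓(G) is {0, n with multiplicity t−1, and n+n_i with multiplicity n_i−1 for each i}. -/
open Matrix BigOperators Polynomial
open scoped Classical

/-- The distance matrix of the complete multipartite graph `K_{n_1,…,n_t}`:
distance `1` between different parts and `2` within a part. -/
noncomputable def dMatKMP {t : ℕ} (n : Fin t → ℕ) :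
    Matrix (Σ i : Fin t, Fin (n i)) (Σ i : Fin t, Fin (n i)) ℝ :=
  fun x y => if x = y then 0 else if x.1 = y.1 then 2 else 1

/-- The distance Laplacian `𝓛 = Tr - 𝓓` of the complete multipartite graph, where
`Tr` is the diagonal matrix of transmissions (row sums of `𝓓`). -/
noncomputable def dLapKMP {t : ℕ} (n : Fin t → ℕ) :
    Matrix (Σ i : Fin t, Fin (n i)) (Σ i : Fin t, Fin (n i)) ℝ :=
  Matrix.diagonal (fun x => ∑ y, dMatKMP n x y) - dMatKMP n

/-!
Write `J` for the all-ones matrix and `N = ∑ nᵢ`. Since `𝓓 = J + P - 2I` with `P` the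
block-diagonal all-ones matrix, `𝓛 = blockDiag((N + nᵢ) I - J) - J`. For real `x` off
`{N} ∪ {N + nᵢ}`, `x I - 𝓛 = A + J` with `A = blockDiag((x - N - nᵢ) I + J)` invertible,
and `A 𝟙 = (x - N) 𝟙` because `𝓛 𝟙 = 0`. The matrix determinant lemma then gives
`(x - N) det(x I - 𝓛) = x det A`, and `det(a I + J) = a^(m-1) (a + m)` for an `m × m` block.
Two polynomials agreeing at infinitely many points are equal.
-/

namespace Matrix

theorem det_blockDiagonal' {o R : Type*} {m : o → Type*} [Fintype o] [DecidableEq o]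
    [∀ i, Fintype (m i)] [∀ i, DecidableEq (m i)] [CommRing R]
    (M : ∀ i, Matrix (m i) (m i) R) :
    (blockDiagonal' M).det = ∏ i, (M i).det := by
  let : LinearOrder o := LinearOrder.lift' _ (Fintype.equivFin o).injective
  -- `convert`, since this order brings its own `DecidableEq o` instance
  convert (blockTriangular_blockDiagonal' M).det_fintype using 1
  refine Finset.prod_congr rfl fun k _ => ?_
  rw [← det_submatrix_equiv_self (Equiv.sigmaSubtype k).symm]
  congr 1
  ext a b
  show M k a b = blockDiagonal' M ⟨k, a⟩ ⟨k, b⟩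
  rw [blockDiagonal'_apply', dif_pos rfl, cast_eq]

theorem det_add_allOnes_of_mulVec_const {m K : Type*} [Fintype m] [DecidableEq m] [Field K]
    {A : Matrix m m K} (hA : IsUnit A.det) {μ : K} (hμ : A *ᵥ (fun _ => 1) = fun _ => μ) :
    μ * (A + of fun _ _ => 1).det = (μ + Fintype.card m) * A.det := by
  have hJ : (of fun _ _ => 1 : Matrix m m K)
      = replicateCol Unit (fun _ => (1 : K)) * replicateRow Unit (fun _ => (1 : K)) := by
    ext; simp [mul_apply]
  have hinv : μ • (A⁻¹ *ᵥ fun _ => (1 : K)) = fun _ => 1 := by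
    rw [← mulVec_smul, show (μ • fun _ => (1 : K)) = A *ᵥ fun _ => 1 by rw [hμ]; ext; simp,
      mulVec_mulVec, nonsing_inv_mul _ hA, one_mulVec]
  rw [hJ, det_add_replicateCol_mul_replicateRow hA, det_unique (1 + _)]
  have hdot : μ * ((fun _ => 1) ⬝ᵥ (A⁻¹ *ᵥ fun _ => 1)) = Fintype.card m := by
    rw [← smul_eq_mul, ← dotProduct_smul, hinv]
    simp [dotProduct]
  rw [add_apply, one_apply_eq, Matrix.mul_assoc, ← replicateCol_mulVec,
    replicateRow_mul_replicateCol_apply]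
  linear_combination A.det * hdot

theorem det_smul_one_add_allOnes {m K : Type*} [Fintype m] [DecidableEq m] [Nonempty m]
    [Field K] {a : K} (ha : a ≠ 0) :
    (a • (1 : Matrix m m K) + of fun _ _ => 1).det
      = a ^ (Fintype.card m - 1) * (a + Fintype.card m) := by
  have hdet : (a • (1 : Matrix m m K)).det = a ^ Fintype.card m := by simp
  have key := det_add_allOnes_of_mulVec_const (A := a • (1 : Matrix m m K)) (μ := a)
    (by simpa [hdet] using ha) (by ext; simp [smul_mulVec])
  rw [hdet] at key
  obtain ⟨c, hc⟩ := Nat.exists_eq_add_one_of_ne_zero (Fintype.card_ne_zero (α := m))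
  rw [hc] at key ⊢
  apply mul_left_cancel₀ ha
  push_cast at key ⊢
  linear_combination key

theorem diagonal_rowSum_sub_mulVec_one {m R : Type*} [Fintype m] [DecidableEq m] [CommRing R]
    (D : Matrix m m R) : (diagonal (fun i => ∑ j, D i j) - D) *ᵥ (fun _ => 1) = 0 := by
  ext i
  rw [sub_mulVec, Pi.sub_apply, mulVec_diagonal]
  simp [mulVec, dotProduct]

end Matrix

section CompleteMultipartite

variable {t : ℕ} (n : Fin t → ℕ)

theorem sum_dMatKMP (x : Σ i : Fin t, Fin (n i)) :
    ∑ y, dMatKMP n x y = ∑ i, (n i : ℝ) + n x.1 - 2 := by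
  have h : ∀ y, dMatKMP n x y
      = 1 + (if x.1 = y.1 then 1 else 0) - 2 * (if x = y then 1 else 0) := by
    intro y
    unfold dMatKMP
    grind
  have hpart : ∑ y : Σ i : Fin t, Fin (n i), (if x.1 = y.1 then (1 : ℝ) else 0) = n x.1 := by
    rw [Fintype.sum_sigma, Fintype.sum_eq_single x.1 fun i hi => by simp [Ne.symm hi]]
    simp
  simp [h, Finset.sum_sub_distrib, Finset.sum_add_distrib, hpart]

theorem scalar_sub_dLapKMP (x : ℝ) :
    scalar _ x - dLapKMP n
      = blockDiagonal' (fun i =>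
          (x - (∑ j, (n j : ℝ) + n i)) • (1 : Matrix (Fin (n i)) (Fin (n i)) ℝ)
            + of fun _ _ => 1) + of fun _ _ => 1 := by
  ext ⟨i, a⟩ ⟨j, b⟩
  simp only [dLapKMP, Matrix.sub_apply, Matrix.add_apply, scalar_apply, diagonal_apply,
    sum_dMatKMP, blockDiagonal'_apply']
  by_cases hij : i = j
  · subst hij
    by_cases hab : a = b
    · subst hab
      simp [dMatKMP]
      grind
    · simp [dMatKMP, hab]
      grind
  · simp [dMatKMP, hij]

theorem det_scalar_sub_dLapKMP (hpos : ∀ i, 0 < n i) {x : ℝ} (hx : x ≠ ∑ j, (n j : ℝ))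
    (hxi : ∀ i, x ≠ ∑ j, (n j : ℝ) + n i) :
    (x - ∑ j, (n j : ℝ)) * (scalar _ x - dLapKMP n).det
      = x * (x - ∑ j, (n j : ℝ)) ^ t * ∏ i, (x - (∑ j, (n j : ℝ) + n i)) ^ (n i - 1) := by
  set N := ∑ j, (n j : ℝ)
  set A := blockDiagonal' (fun i => (x - (N + n i)) • (1 : Matrix (Fin (n i)) (Fin (n i)) ℝ)
    + of fun _ _ => 1)
  have hdetA : A.det = (x - N) ^ t * ∏ i, (x - (N + n i)) ^ (n i - 1) := by
    have hblock : ∀ i,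
        ((x - (N + n i)) • (1 : Matrix (Fin (n i)) (Fin (n i)) ℝ) + of fun _ _ => 1).det
          = (x - (N + n i)) ^ (n i - 1) * (x - N) := by
      intro i
      have : Nonempty (Fin (n i)) := Fin.pos_iff_nonempty.1 (hpos i)
      rw [det_smul_one_add_allOnes (sub_ne_zero.2 (hxi i)), Fintype.card_fin]
      ring
    simp only [A, det_blockDiagonal', hblock, Finset.prod_mul_distrib, Finset.prod_const,
      Finset.card_univ, Fintype.card_fin]
    ring
  have hAones : A *ᵥ (fun _ => 1) = fun _ => x - N := by
    have hA : A = scalar _ x - dLapKMP n - of fun _ _ => 1 := by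
      rw [scalar_sub_dLapKMP]; abel
    rw [hA, sub_mulVec, sub_mulVec, dLapKMP, diagonal_rowSum_sub_mulVec_one]
    ext
    simp [mulVec, dotProduct, N]
  have hunit : IsUnit A.det := by
    rw [hdetA, isUnit_iff_ne_zero]
    exact mul_ne_zero (pow_ne_zero _ (sub_ne_zero.2 hx))
      (Finset.prod_ne_zero_iff.2 fun i _ => pow_ne_zero _ (sub_ne_zero.2 (hxi i)))
  have hcard : (Fintype.card (Σ i : Fin t, Fin (n i)) : ℝ) = N := by simp [N]
  rw [scalar_sub_dLapKMP, det_add_allOnes_of_mulVec_const hunit hAones, hdetA, hcard]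
  ring

end CompleteMultipartite

/-- The distance Laplacian spectrum of `K_{n_1,…,n_t}` on
`N = n_1 + ⋯ + n_t` vertices is `{0, N^{[t-1]}, (N + n_i)^{[n_i-1]}}`, stated via the
characteristic polynomial. -/
theorem distLap_spectrum_completeMultipartite {t : ℕ} (ht : 2 ≤ t)
    (n : Fin t → ℕ) (hpos : ∀ i, 0 < n i) (N : ℕ) (hN : N = ∑ i, n i) :
    (dLapKMP n).charpoly
      = X * (X - C (N : ℝ)) ^ (t - 1)
        * ∏ i : Fin t, (X - C ((N : ℝ) + (n i : ℝ))) ^ (n i - 1) := by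
  have hN' : (N : ℝ) = ∑ i, (n i : ℝ) := by rw [hN]; push_cast; rfl
  apply eq_of_infinite_eval_eq
  refine (Finset.finite_toSet (insert (N : ℝ) (Finset.univ.image fun i => (N : ℝ) + n i)))
    |>.infinite_compl.mono fun x hx => ?_
  simp only [Finset.coe_insert, Finset.coe_image, Finset.coe_univ, Set.image_univ,
    Set.mem_compl_iff, Set.mem_insert_iff, Set.mem_range, not_or, not_exists] at hx
  obtain ⟨hxN, hxi⟩ := hx
  rw [Set.mem_ofPred_eq, eval_charpoly]
  simp only [eval_mul, eval_pow, eval_sub, eval_X, eval_C, eval_prod]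
  rw [hN'] at hxN hxi ⊢
  apply mul_left_cancel₀ (sub_ne_zero.2 hxN)
  rw [det_scalar_sub_dLapKMP n hpos hxN fun i h => hxi i h.symm,
    ← mul_pow_sub_one (by omega : t ≠ 0)]
  ring
end

section
/- Let G = K_{n_1,...,n_t} be the complete t-partite graph on n vertices. Then the characteristic polynomial of its distance matrix equals (λ+2)^{n−t}·[∏_{i=1}^t(λ−n_i+2) − ∑_{i=1}^t n_i ∏_{j≠i}(λ−n_j+2)]. -/
/-!
Write `P` for the vertex–part incidence matrix and `J` for the all-ones matrix on the parts.
Then `𝓓 = P (I + J) Pᵀ - 2 I`, so `χ_𝓓(λ) = χ_{P (I + J) Pᵀ}(λ + 2)`, and `P (I + J) Pᵀ` has the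
nonzero spectrum of `(I + J) Pᵀ P = (I + J) diag(n) = diag(n) + 𝟙 nᵀ`, which accounts for the
factor `λ^(N - t)` before the shift. The characteristic polynomial of this rank-one perturbation
of a diagonal matrix is given by the matrix determinant lemma.
-/

open Matrix BigOperators Polynomial
open scoped Classical

namespace Matrix

section

variable {κ R : Type*} [Fintype κ] [DecidableEq κ] [Semiring R]

theorem submatrix_eq_one_submatrix_mul_mul_one_submatrix {ι ι' : Type*}
    (B : Matrix κ κ R) (f : ι → κ) (g : ι' → κ) :
    B.submatrix f g
      = (1 : Matrix κ κ R).submatrix f id * B * (1 : Matrix κ κ R).submatrix id g := by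
  ext i j
  simp [Matrix.mul_apply, one_apply]

theorem one_submatrix_id_sigma_fst_mul {β : κ → Type*} [∀ k, Fintype (β k)] :
    ((1 : Matrix κ κ R).submatrix id Sigma.fst : Matrix κ (Σ k, β k) R)
        * ((1 : Matrix κ κ R).submatrix Sigma.fst id : Matrix (Σ k, β k) κ R)
      = diagonal fun k => (Fintype.card (β k) : R) := by
  ext i j
  rcases eq_or_ne i j with rfl | hij
  · simp [Matrix.mul_apply, one_apply, Fintype.sum_sigma]
  · simp [Matrix.mul_apply, one_apply, Fintype.sum_sigma, hij]

theorem one_add_vecMulVec_mul_diagonal (u v d : κ → R) :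
    (1 + vecMulVec u v) * diagonal d = diagonal d + vecMulVec u (v * d) := by
  ext i j
  rcases eq_or_ne i j with rfl | hij
  · simp [vecMulVec_apply, add_mul, mul_assoc]
  · simp [vecMulVec_apply, hij, mul_assoc]

end

section

variable {m : Type*} [Fintype m] [DecidableEq m]

theorem det_diagonal_add_vecMulVec_of_ne_zero {K : Type*} [Field K]
    {d : m → K} (hd : ∀ i, d i ≠ 0) (u v : m → K) :
    (diagonal d + vecMulVec u v).det
      = ∏ i, d i + ∑ i, u i * v i * ∏ j ∈ Finset.univ.erase i, d j := by
  have hfactor : diagonal d + vecMulVec u v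
      = diagonal d * (1 + replicateCol Unit (fun i => (d i)⁻¹ * u i) * replicateRow Unit v) := by
    rw [Matrix.mul_add, Matrix.mul_one, ← Matrix.mul_assoc, vecMulVec_eq Unit]
    congr 2
    ext i j
    simp [diagonal_mul, mul_inv_cancel_left₀ (hd i)]
  rw [hfactor, det_mul, det_diagonal, det_one_add_replicateCol_mul_replicateRow, mul_add,
    mul_one, dotProduct, Finset.mul_sum]
  congr 1
  refine Finset.sum_congr rfl fun i _ => ?_
  rw [← Finset.mul_prod_erase Finset.univ d (Finset.mem_univ i)]
  field_simp [hd i]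

theorem charpoly_diagonal_add_vecMulVec {R : Type*} [CommRing R] [IsDomain R] (d u v : m → R) :
    (diagonal d + vecMulVec u v).charpoly
      = ∏ i, (X - C (d i)) - ∑ i, C (u i * v i) * ∏ j ∈ Finset.univ.erase i, (X - C (d j)) := by
  -- In the fraction field of `R[X]` every `X - C (d i)` is invertible.
  let φ := algebraMap R[X] (FractionRing R[X])
  have hφ : Function.Injective φ := IsFractionRing.injective _ _
  have hcharmatrix : φ.mapMatrix (charmatrix (diagonal d + vecMulVec u v))
      = diagonal (fun i => φ (X - C (d i)))
        + vecMulVec (fun i => -φ (C (u i))) (fun i => φ (C (v i))) := by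
    ext i j
    rcases eq_or_ne i j with rfl | hij
    · simp [charmatrix_apply_eq, vecMulVec_apply]
      ring
    · simp [hij, vecMulVec_apply]
  have hd : ∀ i, φ (X - C (d i)) ≠ 0 := fun i => (map_ne_zero_iff φ hφ).2 (X_sub_C_ne_zero _)
  apply hφ
  rw [charpoly, RingHom.map_det, hcharmatrix, det_diagonal_add_vecMulVec_of_ne_zero hd]
  simp [sub_eq_add_neg]

end

end Matrix

theorem dMatKMP_eq_submatrix_sub_scalar {t : ℕ} (n : Fin t → ℕ) :
    dMatKMP n = (1 + vecMulVec 1 1 : Matrix (Fin t) (Fin t) ℝ).submatrix Sigma.fst Sigma.fst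
      - scalar _ 2 := by
  ext x y
  by_cases hxy : x = y
  · subst hxy
    norm_num [dMatKMP]
  · by_cases hpart : x.1 = y.1 <;> norm_num [dMatKMP, hxy, hpart, one_apply]

theorem dist_charpoly_completeMultipartite_general {t : ℕ}
    (n : Fin t → ℕ) (hpos : ∀ i, 0 < n i) (N : ℕ) (hN : N = ∑ i, n i) :
    (dMatKMP n).charpoly
      = (X + C (2 : ℝ)) ^ (N - t)
        * ((∏ i : Fin t, (X - C ((n i : ℝ) - 2)))
            - ∑ i : Fin t, C (n i : ℝ)
                * ∏ j ∈ Finset.univ.erase i, (X - C ((n j : ℝ) - 2))) := by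
  have hcard : Fintype.card (Σ i : Fin t, Fin (n i)) = N := by simp [hN]
  have htN : Fintype.card (Fin t) ≤ Fintype.card (Σ i : Fin t, Fin (n i)) := by
    simpa using Finset.card_nsmul_le_sum Finset.univ n 1 fun i _ => hpos i
  rw [dMatKMP_eq_submatrix_sub_scalar, charpoly_sub_scalar,
    submatrix_eq_one_submatrix_mul_mul_one_submatrix, Matrix.mul_assoc,
    charpoly_mul_comm_of_le _ _ htN, Matrix.mul_assoc, one_submatrix_id_sigma_fst_mul,
    one_add_vecMulVec_mul_diagonal, charpoly_diagonal_add_vecMulVec, hcard]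
  have hshift : ∀ a : ℝ, (X - C a).comp (X + C 2) = X - C (a - 2) := fun a => by
    simp only [sub_comp, X_comp, C_comp, C_sub]
    ring
  simp only [mul_comp, pow_comp, X_comp, sub_comp, prod_comp, sum_comp, C_comp, hshift]
  simp

/-- The characteristic polynomial of the distance matrix of
`K_{n_1,…,n_t}` on `N = n_1 + ⋯ + n_t` vertices equals
`(λ+2)^{N-t}·[∏_i (λ−n_i+2) − ∑_i n_i ∏_{j≠i} (λ−n_j+2)]`. -/
theorem dist_charpoly_completeMultipartite {t : ℕ} (ht : 2 ≤ t)
    (n : Fin t → ℕ) (hpos : ∀ i, 0 < n i) (N : ℕ) (hN : N = ∑ i, n i) :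
    (dMatKMP n).charpoly
      = (X + C (2 : ℝ)) ^ (N - t)
        * ((∏ i : Fin t, (X - C ((n i : ℝ) - 2)))
            - ∑ i : Fin t, C (n i : ℝ)
                * ∏ j ∈ Finset.univ.erase i, (X - C ((n j : ℝ) - 2))) :=
  dist_charpoly_completeMultipartite_general n hpos N hN
end

section
/- For 1 ≤ k ≤ n−2 and 1 ≤ p ≤ n−k−1, let K⃗(n,k,p) be the digraph K⃗_k ▽ (K⃗_p ∪ K⃗_{n−p−k}) together with all arcs from K⃗_p to K⃗_{n−p−k}. Then the adjacency spectral radius of K⃗(n,k,p) equals (n−2+√(4p²−4(n−k)p+n²))/2, and consequently for any strongly connected digraph G⃗ on n vertices with vertex connectivity k, ρ(G⃗) ≤ (n−2+√((n−2)²+4k))/2, with equality iff G⃗ ≅ K⃗(n,k,1) or K⃗(n,k,n−k−1). -/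
open Matrix BigOperators
open scoped Classical

/-- The spectral radius of a real square matrix: the largest modulus of a
(complex) eigenvalue. -/
noncomputable def specRad {n : Type*} [Fintype n] [DecidableEq n]
    (A : Matrix n n ℝ) : ℝ :=
  ⨆ μ : spectrum ℂ (A.map Complex.ofReal), ‖μ.val‖

/-- `reachIn A k u v` : there is a directed walk of length `k` from `u` to `v`
in the digraph with arc relation `A`. -/
def reachIn {V : Type*} (A : V → V → Prop) : ℕ → V → V → Prop
  | 0 => fun u v => u = v
  | (k + 1) => fun u v => ∃ w, A u w ∧ reachIn A k w v

/-- A digraph is strongly connected if every vertex is reachable from every vertex. -/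
def StronglyConn {V : Type*} (A : V → V → Prop) : Prop :=
  ∀ u v : V, ∃ k : ℕ, reachIn A k u v

/-- The 0-1 adjacency matrix of a digraph. -/
noncomputable def adjMat {V : Type*} [Fintype V] (A : V → V → Prop) : Matrix V V ℝ :=
  fun u v => if A u v then 1 else 0

/-- The directed distance from `u` to `v`: the length of a shortest directed walk. -/
noncomputable def ddist {V : Type*} (A : V → V → Prop) (u v : V) : ℕ :=
  sInf {k : ℕ | reachIn A k u v}

/-- The distance matrix of a digraph. -/
noncomputable def distMat {V : Type*} [Fintype V] (A : V → V → Prop) : Matrix V V ℝ :=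
  fun u v => (ddist A u v : ℝ)

/-- The induced subdigraph on a set `s` is strongly connected: any two vertices of `s`
are joined by a directed walk staying inside `s`. -/
def StronglyConnOn {V : Type*} (A : V → V → Prop) (s : Set V) : Prop :=
  ∀ u ∈ s, ∀ v ∈ s, ∃ k : ℕ, reachIn (fun a b => A a b ∧ a ∈ s ∧ b ∈ s) k u v

/-- The digraph has vertex connectivity `k`: deleting any fewer than `k` vertices
leaves it strongly connected, and some set of `k` vertices destroys strong
connectivity. -/
def VertexConnEq {V : Type*} [Fintype V] [DecidableEq V] (A : V → V → Prop) (k : ℕ) : Prop :=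
  (∀ S : Finset V, S.card < k → StronglyConnOn A {v | v ∉ S}) ∧
  (∃ S : Finset V, S.card = k ∧ ¬ StronglyConnOn A {v | v ∉ S})

/-- The digraph `K⃗(n,k,p) = K⃗_k ▽ (K⃗_p ∪ K⃗_{n-p-k})` plus all arcs from `K⃗_p` to
`K⃗_{n-p-k}`: vertices `0,…,p-1` form `K⃗_p`, vertices `p,…,p+k-1` form `K⃗_k`,
the rest form `K⃗_{n-p-k}`; every ordered pair of distinct vertices is an arc except
those from the last block to the first block. -/
def Karc (n k p : ℕ) : Fin n → Fin n → Prop :=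
  fun u v => u ≠ v ∧ ¬(p + k ≤ (u : ℕ) ∧ (v : ℕ) < p)

/-!
A digraph with a vertex cut `S` of size `k` splits as `P, S, Q`, where `P` consists of the
vertices of `G - S` from which a fixed vertex `v₀` is reachable inside `G - S`; no arc goes from
`Q` to `P`, so after relabelling `G` is a spanning subdigraph of `K⃗(n, k, |P|)`.

The adjacency matrix of `K⃗(n, k, p)` has block-constant right and left eigenvectors for
`ρ = (n - 2 + √(n² - 4pq)) / 2`, the left one positive. For an eigenpair `(μ, v)` of a nonnegative
matrix dominated by it, pairing `|v|` with the left eigenvector gives `|μ| ≤ ρ`; if `|μ| = ρ`, then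
`|v|` is a nonnegative `ρ`-eigenvector of `K⃗(n, k, p)`, hence positive, which forces the two
matrices to coincide. Finally `n² - 4pq = (n - 2)² + 4k - 4(p - 1)(q - 1)` is largest exactly when
`p = 1` or `q = 1`.
-/

open Finset

section SpectralRadius

variable {ι : Type*} [Fintype ι] [DecidableEq ι]

theorem Matrix.mem_spectrum_iff_exists_mulVec_eq_smul {K : Type*} [Field K] (A : Matrix ι ι K)
    (μ : K) : μ ∈ spectrum K A ↔ ∃ v ≠ 0, A *ᵥ v = μ • v := by
  rw [← Matrix.spectrum_toLin', ← Module.End.hasEigenvalue_iff_mem_spectrum]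
  constructor
  · intro h
    obtain ⟨v, hv⟩ := h.exists_hasEigenvector
    exact ⟨v, hv.2, by simpa using hv.apply_eq_smul⟩
  · rintro ⟨v, hv0, hv⟩
    exact Module.End.hasEigenvalue_of_hasEigenvector
      ⟨Module.End.mem_eigenspace_iff.mpr (by simpa using hv), hv0⟩

theorem norm_le_specRad {A : Matrix ι ι ℝ} {μ : ℂ}
    (hμ : μ ∈ spectrum ℂ (A.map Complex.ofReal)) : ‖μ‖ ≤ specRad A :=
  le_ciSup (f := fun μ : spectrum ℂ (A.map Complex.ofReal) => ‖μ.val‖)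
    (Set.finite_range _).bddAbove ⟨μ, hμ⟩

theorem specRad_le [Nonempty ι] {A : Matrix ι ι ℝ} {ρ : ℝ}
    (h : ∀ μ ∈ spectrum ℂ (A.map Complex.ofReal), ‖μ‖ ≤ ρ) : specRad A ≤ ρ :=
  have := (spectrum.nonempty_of_isAlgClosed_of_finiteDimensional ℂ
    (A.map Complex.ofReal)).to_subtype
  ciSup_le fun μ => h μ.1 μ.2

theorem exists_norm_eq_specRad [Nonempty ι] (A : Matrix ι ι ℝ) :
    ∃ μ ∈ spectrum ℂ (A.map Complex.ofReal), ‖μ‖ = specRad A := by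
  have := (spectrum.nonempty_of_isAlgClosed_of_finiteDimensional ℂ
    (A.map Complex.ofReal)).to_subtype
  obtain ⟨μ, hμ⟩ := Finite.exists_max fun μ : spectrum ℂ (A.map Complex.ofReal) => ‖μ.val‖
  exact ⟨μ, μ.2, le_antisymm (norm_le_specRad μ.2) (ciSup_le hμ)⟩

theorem le_specRad_of_mulVec_eq_smul {A : Matrix ι ι ℝ} {ρ : ℝ} {w : ι → ℝ} (hw : w ≠ 0)
    (h : A *ᵥ w = ρ • w) : ρ ≤ specRad A := by
  have hmem : (ρ : ℂ) ∈ spectrum ℂ (A.map Complex.ofReal) := by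
    refine (A.map Complex.ofReal).mem_spectrum_iff_exists_mulVec_eq_smul _ |>.mpr
      ⟨Complex.ofReal ∘ w, fun h0 => hw (funext fun i => by simpa using congrFun h0 i), ?_⟩
    ext i
    simpa [Matrix.mulVec, dotProduct] using congrArg Complex.ofReal (congrFun h i)
  calc ρ ≤ ‖(ρ : ℂ)‖ := by rw [Complex.norm_real, Real.norm_eq_abs]; exact le_abs_self ρ
    _ ≤ specRad A := norm_le_specRad hmem

theorem specRad_submatrix_equiv {κ : Type*} [Fintype κ] [DecidableEq κ] (A : Matrix ι ι ℝ)
    (e : κ ≃ ι) : specRad (A.submatrix e e) = specRad A := by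
  have : (A.submatrix e e).map Complex.ofReal =
      Matrix.reindexAlgEquiv ℂ ℂ e.symm (A.map Complex.ofReal) := by
    ext i j; simp
  unfold specRad
  rw [this, AlgEquiv.spectrum_eq]

end SpectralRadius

section PerronFrobenius

variable {ι : Type*} [Fintype ι] {M B : Matrix ι ι ℝ} {u : ι → ℝ} {ρ : ℝ}

theorem dotProduct_pos_of_pos_of_nonneg {x : ι → ℝ} (hu : ∀ i, 0 < u i) (hx0 : 0 ≤ x)
    (hx : x ≠ 0) : 0 < u ⬝ᵥ x := by
  obtain ⟨i, hi⟩ := Function.ne_iff.mp hx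
  exact Finset.sum_pos' (fun j _ => mul_nonneg (hu j).le (hx0 j))
    ⟨i, Finset.mem_univ i, mul_pos (hu i) ((hx0 i).lt_of_ne' hi)⟩

theorem le_of_smul_le_mulVec (hu : ∀ i, 0 < u i) (hleft : u ᵥ* B = ρ • u) {x : ι → ℝ}
    (hx0 : 0 ≤ x) (hx : x ≠ 0) {c : ℝ} (hc : c • x ≤ B *ᵥ x) : c ≤ ρ := by
  have key : c * (u ⬝ᵥ x) ≤ ρ * (u ⬝ᵥ x) := calc
    c * (u ⬝ᵥ x) = u ⬝ᵥ (c • x) := by rw [dotProduct_smul, smul_eq_mul]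
    _ ≤ u ⬝ᵥ (B *ᵥ x) := dotProduct_le_dotProduct_of_nonneg_left hc fun i => (hu i).le
    _ = ρ * (u ⬝ᵥ x) := by rw [dotProduct_mulVec, hleft, smul_dotProduct, smul_eq_mul]
  exact le_of_mul_le_mul_right key (dotProduct_pos_of_pos_of_nonneg hu hx0 hx)

theorem mulVec_eq_smul_of_smul_le_mulVec (hu : ∀ i, 0 < u i) (hleft : u ᵥ* B = ρ • u)
    {x : ι → ℝ} (hx : ρ • x ≤ B *ᵥ x) : B *ᵥ x = ρ • x := by
  have hsum : u ⬝ᵥ (B *ᵥ x - ρ • x) = 0 := by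
    rw [dotProduct_sub, dotProduct_mulVec, hleft, smul_dotProduct, dotProduct_smul, sub_self]
  have hterm := (Finset.sum_eq_zero_iff_of_nonneg fun i _ =>
    mul_nonneg (hu i).le (sub_nonneg.mpr (hx i))).mp hsum
  ext i
  exact sub_eq_zero.mp ((mul_eq_zero.mp (hterm i (Finset.mem_univ i))).resolve_left (hu i).ne')

theorem mulVec_le_mulVec_of_le (hMB : ∀ i j, M i j ≤ B i j) {x : ι → ℝ} (hx0 : 0 ≤ x) :
    M *ᵥ x ≤ B *ᵥ x := fun i =>
  Finset.sum_le_sum fun j _ => mul_le_mul_of_nonneg_right (hMB i j) (hx0 j)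

theorem norm_smul_le_mulVec_norm (hM : ∀ i j, 0 ≤ M i j) {μ : ℂ} {v : ι → ℂ}
    (hv : M.map Complex.ofReal *ᵥ v = μ • v) :
    ‖μ‖ • (fun i => ‖v i‖) ≤ M *ᵥ fun i => ‖v i‖ := fun i => calc
  ‖μ‖ * ‖v i‖ = ‖∑ j, (M i j : ℂ) * v j‖ := by
    rw [← norm_mul, ← smul_eq_mul, ← Pi.smul_apply, ← hv]; rfl
  _ ≤ ∑ j, M i j * ‖v j‖ := by
    refine (norm_sum_le _ _).trans_eq (Finset.sum_congr rfl fun j _ => ?_)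
    rw [norm_mul, Complex.norm_real, Real.norm_of_nonneg (hM i j)]

theorem norm_le_of_le_of_vecMul_eq_smul [DecidableEq ι] (hM0 : ∀ i j, 0 ≤ M i j)
    (hMB : ∀ i j, M i j ≤ B i j) (hu : ∀ i, 0 < u i) (hleft : u ᵥ* B = ρ • u)
    {μ : ℂ} (hμ : μ ∈ spectrum ℂ (M.map Complex.ofReal)) : ‖μ‖ ≤ ρ := by
  obtain ⟨v, hv0, hv⟩ := (M.map Complex.ofReal).mem_spectrum_iff_exists_mulVec_eq_smul μ |>.mp hμ
  have hx0 : 0 ≤ fun i => ‖v i‖ := fun i => norm_nonneg _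
  refine le_of_smul_le_mulVec hu hleft hx0 ?_
    ((norm_smul_le_mulVec_norm hM0 hv).trans (mulVec_le_mulVec_of_le hMB hx0))
  simpa [funext_iff, Function.ne_iff] using hv0

theorem eq_zero_of_mulVec_eq_smul (hB : ∀ i j, 0 ≤ B i j) {x : ι → ℝ} (hx0 : 0 ≤ x)
    (hx : B *ᵥ x = ρ • x) {i j : ι} (hi : x i = 0) (hij : 0 < B i j) : x j = 0 := by
  have hsum : ∑ l, B i l * x l = 0 := by
    simpa [hi, Matrix.mulVec, dotProduct] using congrFun hx i
  have := (Finset.sum_eq_zero_iff_of_nonneg fun l _ => mul_nonneg (hB i l) (hx0 l)).mp hsum j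
    (Finset.mem_univ j)
  exact (mul_eq_zero.mp this).resolve_left hij.ne'

theorem eq_of_mulVec_eq_of_le (hMB : ∀ i j, M i j ≤ B i j) {x : ι → ℝ} (hx : ∀ j, 0 < x j)
    (h : M *ᵥ x = B *ᵥ x) : M = B := by
  ext i j
  have hsum : ∑ l, (B i l - M i l) * x l = 0 := by
    simp only [sub_mul, Finset.sum_sub_distrib]
    exact sub_eq_zero.mpr (congrFun h i).symm
  have := (Finset.sum_eq_zero_iff_of_nonneg fun l _ =>
    mul_nonneg (sub_nonneg.mpr (hMB i l)) (hx l).le).mp hsum j (Finset.mem_univ j)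
  linarith [(mul_eq_zero.mp this).resolve_right (hx j).ne']

theorem eq_of_le_of_norm_eq [DecidableEq ι] (hM0 : ∀ i j, 0 ≤ M i j)
    (hMB : ∀ i j, M i j ≤ B i j) (hu : ∀ i, 0 < u i) (hleft : u ᵥ* B = ρ • u)
    (hpos : ∀ x, 0 ≤ x → x ≠ 0 → B *ᵥ x = ρ • x → ∀ i, 0 < x i) {μ : ℂ}
    (hμ : μ ∈ spectrum ℂ (M.map Complex.ofReal)) (hnorm : ‖μ‖ = ρ) : M = B := by
  obtain ⟨v, hv0, hv⟩ := (M.map Complex.ofReal).mem_spectrum_iff_exists_mulVec_eq_smul μ |>.mp hμ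
  set x : ι → ℝ := fun i => ‖v i‖
  have hx0 : 0 ≤ x := fun i => norm_nonneg _
  have hρM : ρ • x ≤ M *ᵥ x := hnorm ▸ norm_smul_le_mulVec_norm hM0 hv
  have hMB' := mulVec_le_mulVec_of_le hMB hx0
  have hBx := mulVec_eq_smul_of_smul_le_mulVec hu hleft (hρM.trans hMB')
  refine eq_of_mulVec_eq_of_le hMB (hpos x hx0 ?_ hBx) (le_antisymm hMB' (hBx ▸ hρM))
  simpa [x, funext_iff, Function.ne_iff] using hv0

end PerronFrobenius

section AdjMat

variable {V : Type*} [Fintype V]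

theorem adjMat_nonneg (A : V → V → Prop) (u v : V) : 0 ≤ adjMat A u v := by
  unfold adjMat; split_ifs <;> norm_num

theorem adjMat_pos_iff {A : V → V → Prop} {u v : V} : 0 < adjMat A u v ↔ A u v := by
  unfold adjMat; split_ifs with h <;> simp [h]

theorem adjMat_mono {A A' : V → V → Prop} (h : ∀ u v, A u v → A' u v) (u v : V) :
    adjMat A u v ≤ adjMat A' u v := by
  unfold adjMat
  by_cases h₁ : A u v
  · simp [h₁, h u v h₁]
  · by_cases h₂ : A' u v <;> simp [h₁, h₂]

theorem adjMat_injective : Function.Injective (adjMat : (V → V → Prop) → Matrix V V ℝ) := by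
  intro A A' h
  ext u v
  rw [← adjMat_pos_iff (A := A), h, adjMat_pos_iff]

theorem adjMat_submatrix {W : Type*} [Fintype W] (A : V → V → Prop) (f : W → V) :
    (adjMat A).submatrix f f = adjMat fun u v => A (f u) (f v) := rfl

theorem specRad_adjMat_eq_of_iso [DecidableEq V] {W : Type*} [Fintype W] [DecidableEq W]
    {A : V → V → Prop} {B : W → W → Prop} (e : V ≃ W) (h : ∀ u v, A u v ↔ B (e u) (e v)) :
    specRad (adjMat A) = specRad (adjMat B) := by
  rw [← specRad_submatrix_equiv (adjMat B) e, adjMat_submatrix]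
  simp only [← h]

end AdjMat

section Karc

variable {p k q : ℕ}

def blockVec (p k q : ℕ) (x y z : ℝ) : Fin (p + k + q) → ℝ :=
  fun i => if (i : ℕ) < p then x else if (i : ℕ) < p + k then y else z

theorem sum_blockVec (x y z : ℝ) : ∑ i, blockVec p k q x y z i = p * x + k * y + q * z := by
  have hQ (i : Fin q) : ¬ p + k + (i : ℕ) < p := by omega
  simp [blockVec, Fin.sum_univ_add, hQ]

theorem smul_blockVec (c x y z : ℝ) :
    c • blockVec p k q x y z = blockVec p k q (c * x) (c * y) (c * z) := by
  ext i; simp only [blockVec, Pi.smul_apply, smul_eq_mul]; split_ifs <;> rfl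

theorem blockVec_pos {x y z : ℝ} (hx : 0 < x) (hy : 0 < y) (hz : 0 < z) (i : Fin (p + k + q)) :
    0 < blockVec p k q x y z i := by
  unfold blockVec; split_ifs <;> assumption

theorem adjMat_karc_apply (i j : Fin (p + k + q)) :
    adjMat (Karc (p + k + q) k p) i j =
      1 - (if i = j then 1 else 0) - (if p + k ≤ (i : ℕ) ∧ (j : ℕ) < p then 1 else 0) := by
  by_cases hij : i = j
  · subst hij
    have : ¬ (p + k ≤ (i : ℕ) ∧ (i : ℕ) < p) := by omega
    simp [adjMat, Karc, this]
  · by_cases h : p + k ≤ (i : ℕ) ∧ (j : ℕ) < p <;> simp [adjMat, Karc, hij, h]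

theorem adjMat_karc_mulVec_blockVec (x y z : ℝ) :
    adjMat (Karc (p + k + q) k p) *ᵥ blockVec p k q x y z =
      blockVec p k q (p * x + k * y + q * z - x) (p * x + k * y + q * z - y)
        (k * y + q * z - z) := by
  ext i
  have hP : ∑ j : Fin (p + k + q),
      (if p + k ≤ (i : ℕ) ∧ (j : ℕ) < p then blockVec p k q x y z j else 0) =
      if p + k ≤ (i : ℕ) then p * x else 0 := by
    split_ifs with hi
    · have := sum_blockVec (p := p) (k := k) (q := q) x 0 0
      simp only [mul_zero, add_zero] at this
      rw [← this]
      refine Finset.sum_congr rfl fun j _ => ?_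
      simp only [blockVec, hi, true_and]
      split_ifs <;> rfl
    · simp [hi]
  simp only [mulVec, dotProduct, adjMat_karc_apply, sub_mul, one_mul, ite_mul, zero_mul,
    Finset.sum_sub_distrib, Finset.sum_ite_eq, Finset.mem_univ, if_true, hP, sum_blockVec]
  simp only [blockVec]
  split_ifs <;> first | omega | ring

theorem blockVec_vecMul_adjMat_karc (x y z : ℝ) :
    blockVec p k q x y z ᵥ* adjMat (Karc (p + k + q) k p) =
      blockVec p k q (p * x + k * y - x) (p * x + k * y + q * z - y)
        (p * x + k * y + q * z - z) := by
  ext j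
  have hQ : ∑ i : Fin (p + k + q),
      (if p + k ≤ (i : ℕ) ∧ (j : ℕ) < p then blockVec p k q x y z i else 0) =
      if (j : ℕ) < p then q * z else 0 := by
    split_ifs with hj
    · have := sum_blockVec (p := p) (k := k) (q := q) 0 0 z
      simp only [mul_zero, zero_add] at this
      rw [← this]
      refine Finset.sum_congr rfl fun i _ => ?_
      simp only [blockVec, hj, and_true]
      split_ifs <;> first | rfl | omega
    · simp [hj]
  simp only [vecMul, dotProduct, adjMat_karc_apply, mul_sub, mul_one, mul_ite, mul_zero,
    Finset.sum_sub_distrib, Finset.sum_ite_eq', Finset.mem_univ, if_true, hQ, sum_blockVec]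
  simp only [blockVec]
  split_ifs <;> ring

noncomputable def karcDisc (p k q : ℕ) : ℝ := (p + k + q : ℝ) ^ 2 - 4 * p * q

/-- The largest root of `x² - (n - 2) x - (n - 1 - pq)` (`n = p + k + q`); times `x + 1` this is
the characteristic polynomial of the quotient matrix `!![p - 1, k, q; p, k - 1, q; 0, k, q - 1]`
of `K⃗(n, k, p)`. -/
noncomputable def karcRho (p k q : ℕ) : ℝ := ((p + k + q : ℝ) - 2 + √(karcDisc p k q)) / 2

theorem karcRho_comm : karcRho p k q = karcRho q k p := by
  unfold karcRho karcDisc; ring_nf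

theorem sq_sub_le_karcDisc : ((p : ℝ) - q) ^ 2 ≤ karcDisc p k q := by
  unfold karcDisc
  nlinarith [show (0 : ℝ) ≤ k * (k + 2 * p + 2 * q) by positivity]

theorem karcRho_sq : karcRho p k q ^ 2 =
    ((p + k + q : ℝ) - 2) * karcRho p k q + ((p + k + q : ℝ) - 1 - p * q) := by
  have h := Real.sq_sqrt ((sq_nonneg _).trans (sq_sub_le_karcDisc (p := p) (k := k) (q := q)))
  unfold karcRho
  generalize √(karcDisc p k q) = s at h ⊢
  unfold karcDisc at h
  linear_combination h / 4

theorem karcRho_sub_add_one_pos (hk : 0 < k) : 0 < karcRho p k q - q + 1 := by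
  have := Real.sqrt_le_sqrt (sq_sub_le_karcDisc (p := p) (k := k) (q := q))
  rw [Real.sqrt_sq_eq_abs] at this
  have hk' : (0 : ℝ) < k := by exact_mod_cast hk
  unfold karcRho
  linarith [neg_abs_le ((p : ℝ) - q)]

theorem karcRho_eq {n : ℕ} (hn : n = p + k + q) :
    karcRho p k q = ((n : ℝ) - 2 + √(4 * p ^ 2 - 4 * ((n : ℝ) - k) * p + n ^ 2)) / 2 := by
  subst hn
  unfold karcRho karcDisc
  push_cast
  ring_nf

theorem karcDisc_eq : karcDisc p k q =
    ((p + k + q : ℝ) - 2) ^ 2 + 4 * k - 4 * ((p : ℝ) - 1) * ((q : ℝ) - 1) := by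
  unfold karcDisc; ring

theorem karcRho_le {n : ℕ} (hn : n = p + k + q) (hp : 1 ≤ p) (hq : 1 ≤ q) :
    karcRho p k q ≤ ((n : ℝ) - 2 + √(((n : ℝ) - 2) ^ 2 + 4 * k)) / 2 := by
  subst hn
  have : (0 : ℝ) ≤ ((p : ℝ) - 1) * ((q : ℝ) - 1) :=
    mul_nonneg (by simpa using hp) (by simpa using hq)
  unfold karcRho
  push_cast
  gcongr
  rw [karcDisc_eq]
  linarith

theorem karcRho_eq_iff {n : ℕ} (hn : n = p + k + q) :
    karcRho p k q = ((n : ℝ) - 2 + √(((n : ℝ) - 2) ^ 2 + 4 * k)) / 2 ↔ p = 1 ∨ q = 1 := by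
  subst hn
  have hD := (sq_nonneg _).trans (sq_sub_le_karcDisc (p := p) (k := k) (q := q))
  unfold karcRho
  rw [karcDisc_eq] at hD ⊢
  push_cast
  rw [div_left_inj' two_ne_zero, add_right_inj, Real.sqrt_inj hD (by positivity), sub_eq_self,
    mul_eq_zero, mul_eq_zero, sub_eq_zero, sub_eq_zero]
  norm_num

noncomputable def karcRightVec (p k q : ℕ) : Fin (p + k + q) → ℝ :=
  blockVec p k q (karcRho p k q - q + 1) (karcRho p k q - q + 1) k

noncomputable def karcLeftVec (p k q : ℕ) : Fin (p + k + q) → ℝ :=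
  blockVec p k q k (karcRho p k q - p + 1) (karcRho p k q - p + 1)

theorem adjMat_karc_mulVec_karcRightVec :
    adjMat (Karc (p + k + q) k p) *ᵥ karcRightVec p k q = karcRho p k q • karcRightVec p k q := by
  rw [karcRightVec, adjMat_karc_mulVec_blockVec, smul_blockVec]
  have := karcRho_sq (p := p) (k := k) (q := q)
  congr 1
  · linear_combination -this
  · linear_combination -this
  · ring

theorem karcLeftVec_vecMul_adjMat_karc :
    karcLeftVec p k q ᵥ* adjMat (Karc (p + k + q) k p) = karcRho p k q • karcLeftVec p k q := by
  rw [karcLeftVec, blockVec_vecMul_adjMat_karc, smul_blockVec]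
  have := karcRho_sq (p := p) (k := k) (q := q)
  congr 1
  · ring
  · linear_combination -this
  · linear_combination -this

theorem karcRightVec_ne_zero (hk : 0 < k) : karcRightVec p k q ≠ 0 := by
  have ha := karcRho_sub_add_one_pos (p := p) (q := q) hk
  have hk' : (0 : ℝ) < k := by exact_mod_cast hk
  exact Function.ne_iff.mpr ⟨⟨p, by omega⟩, (blockVec_pos ha ha hk' _).ne'⟩

theorem karcLeftVec_pos (hk : 0 < k) (i : Fin (p + k + q)) : 0 < karcLeftVec p k q i := by
  have hb : 0 < karcRho p k q - p + 1 := by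
    rw [karcRho_comm]; exact karcRho_sub_add_one_pos hk
  have hk' : (0 : ℝ) < k := by exact_mod_cast hk
  exact blockVec_pos hk' hb hb i

theorem pos_of_adjMat_karc_mulVec_eq_smul (hk : 0 < k) {ρ : ℝ} {x : Fin (p + k + q) → ℝ}
    (hx0 : 0 ≤ x) (hx : x ≠ 0) (h : adjMat (Karc (p + k + q) k p) *ᵥ x = ρ • x)
    (i : Fin (p + k + q)) : 0 < x i := by
  have hzero {i j} (hi : x i = 0) (hij : Karc (p + k + q) k p i j) : x j = 0 :=
    eq_zero_of_mulVec_eq_smul (adjMat_nonneg _) hx0 h hi (adjMat_pos_iff.mpr hij)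
  -- the vertex `p` of the middle block is joined to every other vertex in both directions
  obtain ⟨m, hm⟩ : ∃ m : Fin (p + k + q), (m : ℕ) = p := ⟨⟨p, by omega⟩, rfl⟩
  have to_m {i} (hi : x i = 0) : x m = 0 := by
    by_cases him : i = m
    · exact him ▸ hi
    · exact hzero hi ⟨him, by omega⟩
  have from_m (hm0 : x m = 0) (j) : x j = 0 := by
    by_cases hjm : m = j
    · exact hjm ▸ hm0
    · exact hzero hm0 ⟨hjm, by omega⟩
  by_contra hi
  exact hx (funext (from_m (to_m (le_antisymm (not_lt.mp hi) (hx0 i)))))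

theorem specRad_adjMat_le_karcRho (hk : 0 < k) {A : Fin (p + k + q) → Fin (p + k + q) → Prop}
    (hA : ∀ i j, A i j → Karc (p + k + q) k p i j) : specRad (adjMat A) ≤ karcRho p k q :=
  have : Nonempty (Fin (p + k + q)) := ⟨⟨p, by omega⟩⟩
  specRad_le fun _ hμ => norm_le_of_le_of_vecMul_eq_smul (adjMat_nonneg A) (adjMat_mono hA)
    (karcLeftVec_pos hk) karcLeftVec_vecMul_adjMat_karc hμ

theorem eq_karc_of_specRad_adjMat_eq (hk : 0 < k)
    {A : Fin (p + k + q) → Fin (p + k + q) → Prop}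
    (hA : ∀ i j, A i j → Karc (p + k + q) k p i j) (h : specRad (adjMat A) = karcRho p k q) :
    A = Karc (p + k + q) k p := by
  have : Nonempty (Fin (p + k + q)) := ⟨⟨p, by omega⟩⟩
  obtain ⟨μ, hμ, hnorm⟩ := exists_norm_eq_specRad (adjMat A)
  exact adjMat_injective <| eq_of_le_of_norm_eq (adjMat_nonneg A) (adjMat_mono hA)
    (karcLeftVec_pos hk) karcLeftVec_vecMul_adjMat_karc
    (fun _ hx0 hx hBx => pos_of_adjMat_karc_mulVec_eq_smul hk hx0 hx hBx) hμ (hnorm.trans h)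

theorem specRad_adjMat_karc {n : ℕ} (hk : 0 < k) (hn : n = p + k + q) :
    specRad (adjMat (Karc n k p)) = karcRho p k q := by
  subst hn
  exact le_antisymm (specRad_adjMat_le_karcRho hk fun _ _ h => h)
    (le_specRad_of_mulVec_eq_smul (karcRightVec_ne_zero hk) adjMat_karc_mulVec_karcRightVec)

theorem specRad_adjMat_le_karcRho_of_equiv {V : Type*} [Fintype V] [DecidableEq V] (hk : 0 < k)
    {A : V → V → Prop} (e : V ≃ Fin (p + k + q))
    (hA : ∀ u v, A u v → Karc (p + k + q) k p (e u) (e v)) :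
    specRad (adjMat A) ≤ karcRho p k q := by
  rw [specRad_adjMat_eq_of_iso e (B := fun i j => A (e.symm i) (e.symm j)) (by simp)]
  exact specRad_adjMat_le_karcRho hk fun i j h => by simpa using hA _ _ h

theorem karc_iff_of_specRad_adjMat_eq {V : Type*} [Fintype V] [DecidableEq V] (hk : 0 < k)
    {A : V → V → Prop} (e : V ≃ Fin (p + k + q))
    (hA : ∀ u v, A u v → Karc (p + k + q) k p (e u) (e v))
    (h : specRad (adjMat A) = karcRho p k q) (u v : V) :
    A u v ↔ Karc (p + k + q) k p (e u) (e v) := by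
  let A' : Fin (p + k + q) → Fin (p + k + q) → Prop := fun i j => A (e.symm i) (e.symm j)
  have hiso (u v : V) : A u v ↔ A' (e u) (e v) := by simp [A']
  rw [specRad_adjMat_eq_of_iso e hiso] at h
  rw [← eq_karc_of_specRad_adjMat_eq hk (fun i j h => by simpa using hA _ _ h) h]
  exact hiso u v

end Karc

section Cut

variable {V : Type*} [Fintype V] [DecidableEq V]

theorem exists_cut_of_not_stronglyConnOn {A : V → V → Prop} {S : Finset V}
    (h : ¬ StronglyConnOn A {v | v ∉ S}) :
    ∃ P : Finset V, Disjoint P S ∧ P.Nonempty ∧ (∃ u, u ∉ P ∪ S) ∧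
      ∀ u ∉ P ∪ S, ∀ v ∈ P, ¬ A u v := by
  simp only [StronglyConnOn, not_forall, not_exists] at h
  obtain ⟨u₀, hu₀, v₀, hv₀, hwalk⟩ := h
  let R := fun a b => A a b ∧ a ∈ {v | v ∉ S} ∧ b ∈ {v | v ∉ S}
  let P := Finset.univ.filter fun w => w ∉ S ∧ ∃ m, reachIn R m w v₀
  have mem_P {w} : w ∈ P ↔ w ∉ S ∧ ∃ m, reachIn R m w v₀ := by simp [P]
  have notMem_P {u} (hu : u ∉ P ∪ S) : u ∉ S ∧ ∀ m, ¬ reachIn R m u v₀ := by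
    rw [Finset.mem_union, mem_P] at hu
    exact ⟨fun h => hu (.inr h), fun m hm => hu (.inl ⟨fun h => hu (.inr h), m, hm⟩)⟩
  refine ⟨P, Finset.disjoint_left.mpr fun w hw => (mem_P.mp hw).1, ⟨v₀, mem_P.mpr ⟨hv₀, 0, rfl⟩⟩,
    ⟨u₀, ?_⟩, fun u hu v hv huv => ?_⟩
  · rw [Finset.mem_union, mem_P]
    rintro (⟨-, m, hm⟩ | h)
    exacts [hwalk m hm, hu₀ h]
  · obtain ⟨hvS, m, hm⟩ := mem_P.mp hv
    exact (notMem_P hu).2 (m + 1) ⟨v, ⟨huv, (notMem_P hu).1, hvS⟩, hm⟩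

theorem exists_equiv_fin_blocks (P S : Finset V) (h : Disjoint P S) :
    ∃ q, ∃ e : V ≃ Fin (#P + #S + q), ∀ v,
      ((e v : ℕ) < #P ↔ v ∈ P) ∧ (#P + #S ≤ (e v : ℕ) ↔ v ∉ P ∪ S) := by
  let e : V ≃ Fin (#P + #S + Fintype.card {v // v ∉ P ∪ S}) :=
    (Equiv.sumCompl (· ∈ P ∪ S)).symm.trans <| (Equiv.sumCongr
      ((Equiv.Finset.union P S h).symm.trans <|
        (P.equivFin.sumCongr S.equivFin).trans finSumFinEquiv)
      (Fintype.equivFin _)).trans finSumFinEquiv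
  refine ⟨_, e, fun v => ?_⟩
  by_cases hP : v ∈ P
  · have hv : (e v : ℕ) < #P := by simp [e, hP, Finset.mem_union_left S hP]
    exact ⟨iff_of_true hv hP, iff_of_false (by omega) (by simp [hP])⟩
  by_cases hS : v ∈ S
  · have hv : #P ≤ (e v : ℕ) ∧ (e v : ℕ) < #P + #S := by
      simp [e, hS, Finset.mem_union_right P hS]
    exact ⟨iff_of_false (by omega) hP, iff_of_false (by omega) (by simp [hS])⟩
  · have hPS : v ∉ P ∪ S := by simp [hP, hS]
    have hv : #P + #S ≤ (e v : ℕ) := by simp [e, hPS]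
    exact ⟨iff_of_false (by omega) hP, iff_of_true hv hPS⟩

theorem exists_equiv_karc_of_not_stronglyConnOn {A : V → V → Prop} (hirr : ∀ v, ¬ A v v)
    {S : Finset V} {k : ℕ} (hS : #S = k) (h : ¬ StronglyConnOn A {v | v ∉ S}) :
    ∃ p q, 0 < p ∧ 0 < q ∧ ∃ e : V ≃ Fin (p + k + q),
      ∀ u v, A u v → Karc (p + k + q) k p (e u) (e v) := by
  obtain ⟨P, hPS, hP, ⟨u₀, hu₀⟩, hcut⟩ := exists_cut_of_not_stronglyConnOn h
  obtain ⟨q, e, he⟩ := exists_equiv_fin_blocks P S hPS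
  subst hS
  refine ⟨#P, q, Finset.card_pos.mpr hP, ?_, e, fun u v huv => ⟨?_, ?_⟩⟩
  · have := (he u₀).2.mpr hu₀
    omega
  · exact fun heq => hirr u (e.injective heq ▸ huv)
  · exact fun ⟨hu, hv⟩ => hcut u ((he u).2.mp hu) v ((he v).1.mp hv) huv

end Cut

theorem specRad_digraph_connectivity_general (n k : ℕ) (hk1 : 1 ≤ k) :
    (∀ p : ℕ, 1 ≤ p → p ≤ n - k - 1 →
      specRad (adjMat (Karc n k p))
        = ((n : ℝ) - 2 + Real.sqrt (4 * p ^ 2 - 4 * ((n : ℝ) - k) * p + n ^ 2)) / 2) ∧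
    (∀ (V : Type) (_ : Fintype V) (_ : DecidableEq V) (A : V → V → Prop),
      Fintype.card V = n → (∀ v, ¬ A v v) → StronglyConn A → VertexConnEq A k →
      (specRad (adjMat A) ≤ ((n : ℝ) - 2 + Real.sqrt (((n : ℝ) - 2) ^ 2 + 4 * k)) / 2 ∧
       (specRad (adjMat A) = ((n : ℝ) - 2 + Real.sqrt (((n : ℝ) - 2) ^ 2 + 4 * k)) / 2 ↔
         ((∃ e : V ≃ Fin n, ∀ u v, A u v ↔ Karc n k 1 (e u) (e v)) ∨
          (∃ e : V ≃ Fin n, ∀ u v, A u v ↔ Karc n k (n - k - 1) (e u) (e v)))))) := by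
  refine ⟨fun p hp1 hp2 => ?_, fun V _ _ A hcard hirr _ hconn => ?_⟩
  · have hn : n = p + k + (n - k - p) := by omega
    rw [specRad_adjMat_karc hk1 hn, karcRho_eq hn]
  obtain ⟨S, hS, hcut⟩ := hconn.2
  obtain ⟨p, q, hp, hq, e, he⟩ := exists_equiv_karc_of_not_stronglyConnOn hirr hS hcut
  obtain rfl : n = p + k + q := by simpa [hcard] using Fintype.card_congr e
  have hle := specRad_adjMat_le_karcRho_of_equiv hk1 e he
  have hbound := karcRho_le (k := k) rfl hp hq
  refine ⟨hle.trans hbound, fun heq => ?_, ?_⟩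
  · have hρ := le_antisymm hbound (heq ▸ hle)
    have hiso := karc_iff_of_specRad_adjMat_eq hk1 e he (heq.trans hρ.symm)
    rcases (karcRho_eq_iff rfl).mp hρ with rfl | rfl
    · exact .inl ⟨e, hiso⟩
    · exact .inr ⟨e, by rwa [show p + k + 1 - k - 1 = p by omega]⟩
  · rintro (⟨e', he'⟩ | ⟨e', he'⟩)
    · rw [specRad_adjMat_eq_of_iso e' he', specRad_adjMat_karc hk1 (q := p + q - 1) (by omega),
        karcRho_eq_iff (by omega)]
      exact .inl rfl
    · rw [specRad_adjMat_eq_of_iso e' he', specRad_adjMat_karc hk1 (q := 1) (by omega),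
        karcRho_eq_iff (by omega)]
      exact .inr rfl

/-- The adjacency spectral radius of `K⃗(n,k,p)` equals
`(n-2+√(4p²-4(n-k)p+n²))/2`; consequently any strongly connected digraph on `n`
vertices with vertex connectivity `k` satisfies `ρ(G⃗) ≤ (n-2+√((n-2)²+4k))/2`, with
equality iff `G⃗ ≅ K⃗(n,k,1)` or `G⃗ ≅ K⃗(n,k,n-k-1)`. -/
theorem specRad_digraph_connectivity (n k : ℕ) (hk1 : 1 ≤ k) (hk2 : k ≤ n - 2) :
    (∀ p : ℕ, 1 ≤ p → p ≤ n - k - 1 →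
      specRad (adjMat (Karc n k p))
        = ((n : ℝ) - 2 + Real.sqrt (4 * p ^ 2 - 4 * ((n : ℝ) - k) * p + n ^ 2)) / 2) ∧
    (∀ (V : Type) (_ : Fintype V) (_ : DecidableEq V) (A : V → V → Prop),
      Fintype.card V = n → (∀ v, ¬ A v v) → StronglyConn A → VertexConnEq A k →
      (specRad (adjMat A) ≤ ((n : ℝ) - 2 + Real.sqrt (((n : ℝ) - 2) ^ 2 + 4 * k)) / 2 ∧
       (specRad (adjMat A) = ((n : ℝ) - 2 + Real.sqrt (((n : ℝ) - 2) ^ 2 + 4 * k)) / 2 ↔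
         ((∃ e : V ≃ Fin n, ∀ u v, A u v ↔ Karc n k 1 (e u) (e v)) ∨
          (∃ e : V ≃ Fin n, ∀ u v, A u v ↔ Karc n k (n - k - 1) (e u) (e v)))))) :=
  specRad_digraph_connectivity_general n k hk1
end

section
/- For 1 ≤ k ≤ n−2, 1 ≤ p ≤ n−k−1, and q = n−p−k, the Laplacian spectrum of the digraph K⃗(n,k,p) is {0, n with multiplicity p+k−1, n−p with multiplicity q}, and its distance Laplacian spectrum is {0, n with multiplicity p+k−1, n+p with multiplicity q}. -/
open Matrix BigOperators
open scoped Classical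

open Polynomial

/-- The Laplacian matrix of a digraph: (diagonal matrix of out-degrees) − (adjacency
matrix). -/
noncomputable def digraphLap {V : Type*} [Fintype V] [DecidableEq V]
    (A : V → V → Prop) : Matrix V V ℝ :=
  Matrix.diagonal (fun u => ((Finset.univ.filter (fun v => A u v)).card : ℝ)) - adjMat A

/-- The distance Laplacian matrix of a digraph: `𝓛 = Tr − 𝓓`, where `Tr` is the
diagonal matrix of transmissions. -/
noncomputable def digraphDistLap {V : Type*} [Fintype V] [DecidableEq V]
    (A : V → V → Prop) : Matrix V V ℝ :=
  Matrix.diagonal (fun u => ∑ w, (ddist A u w : ℝ)) - distMat A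


open Polynomial

lemma sum_blocks_fin {R : Type*} [CommRing R] {n p k q : ℕ} (hn : n = p + k + q)
    (f : Fin n → R) (c₁ c₂ c₃ : R)
    (hf : ∀ i : Fin n, f i = if (i : ℕ) < p then c₁ else if p + k ≤ (i : ℕ) then c₃ else c₂) :
    ∑ i, f i = p * c₁ + k * c₂ + q * c₃ := by
  have h1 : ∑ i, f i
      = ∑ i ∈ Finset.range n, (if i < p then c₁ else if p + k ≤ i then c₃ else c₂) := by
    rw [← Fin.sum_univ_eq_sum_range (fun i => if i < p then c₁ else if p + k ≤ i then c₃ else c₂) n]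
    exact Finset.sum_congr rfl fun i _ => hf i
  subst hn
  rw [h1, Finset.sum_range_add, Finset.sum_range_add]
  have e1 : ∑ i ∈ Finset.range p, (if i < p then c₁ else if p + k ≤ i then c₃ else c₂)
      = p * c₁ := by
    rw [Finset.sum_congr rfl (fun i hi => by
      rw [if_pos (Finset.mem_range.mp hi)]), Finset.sum_const, Finset.card_range,
      nsmul_eq_mul]
  have e2 : ∑ i ∈ Finset.range k, (if p + i < p then c₁ else if p + k ≤ p + i then c₃ else c₂)
      = k * c₂ := by
    rw [Finset.sum_congr rfl (fun i hi => by
      have := Finset.mem_range.mp hi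
      rw [if_neg (by omega), if_neg (by omega)]), Finset.sum_const, Finset.card_range,
      nsmul_eq_mul]
  have e3 : ∑ i ∈ Finset.range q,
        (if p + k + i < p then c₁ else if p + k ≤ p + k + i then c₃ else c₂)
      = q * c₃ := by
    rw [Finset.sum_congr rfl (fun i hi => by
      rw [if_neg (by omega), if_pos (by omega)]), Finset.sum_const, Finset.card_range,
      nsmul_eq_mul]
  rw [e1, e2, e3]

lemma prod_blocks_fin {R : Type*} [CommRing R] {n p k q : ℕ} (hn : n = p + k + q)
    (f : Fin n → R) (c₁ c₂ c₃ : R)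
    (hf : ∀ i : Fin n, f i = if (i : ℕ) < p then c₁ else if p + k ≤ (i : ℕ) then c₃ else c₂) :
    ∏ i, f i = c₁ ^ p * c₂ ^ k * c₃ ^ q := by
  have h1 : ∏ i, f i
      = ∏ i ∈ Finset.range n, (if i < p then c₁ else if p + k ≤ i then c₃ else c₂) := by
    rw [← Fin.prod_univ_eq_prod_range (fun i => if i < p then c₁ else if p + k ≤ i then c₃ else c₂) n]
    exact Finset.prod_congr rfl fun i _ => hf i
  subst hn
  rw [h1, Finset.prod_range_add, Finset.prod_range_add]
  have e1 : ∏ i ∈ Finset.range p, (if i < p then c₁ else if p + k ≤ i then c₃ else c₂)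
      = c₁ ^ p := by
    rw [Finset.prod_congr rfl (fun i hi => by
      rw [if_pos (Finset.mem_range.mp hi)]), Finset.prod_const, Finset.card_range]
  have e2 : ∏ i ∈ Finset.range k, (if p + i < p then c₁ else if p + k ≤ p + i then c₃ else c₂)
      = c₂ ^ k := by
    rw [Finset.prod_congr rfl (fun i hi => by
      have := Finset.mem_range.mp hi
      rw [if_neg (by omega), if_neg (by omega)]), Finset.prod_const, Finset.card_range]
  have e3 : ∏ i ∈ Finset.range q,
        (if p + k + i < p then c₁ else if p + k ≤ p + k + i then c₃ else c₂)
      = c₃ ^ q := by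
    rw [Finset.prod_congr rfl (fun i hi => by
      rw [if_neg (by omega), if_pos (by omega)]), Finset.prod_const, Finset.card_range]
  rw [e1, e2, e3]


lemma ddist_self {V : Type*} (A : V → V → Prop) (u : V) : ddist A u u = 0 :=
  Nat.sInf_eq_zero.mpr (Or.inl (show reachIn A 0 u u from rfl))

lemma ddist_eq_one {V : Type*} {A : V → V → Prop} {u v : V} (h : A u v) (hne : u ≠ v) :
    ddist A u v = 1 := by
  have h1 : (1 : ℕ) ∈ {k : ℕ | reachIn A k u v} := ⟨v, h, rfl⟩
  refine le_antisymm (Nat.sInf_le h1) ?_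
  have hm := Nat.sInf_mem (⟨1, h1⟩ : Set.Nonempty {k : ℕ | reachIn A k u v})
  rcases Nat.eq_zero_or_pos (sInf {k : ℕ | reachIn A k u v}) with h0 | h0
  · rw [h0] at hm; exact absurd hm hne
  · exact h0

lemma ddist_eq_two {V : Type*} {A : V → V → Prop} {u v : V} (h2 : reachIn A 2 u v)
    (h0 : u ≠ v) (h1 : ¬ A u v) : ddist A u v = 2 := by
  have hmem : (2 : ℕ) ∈ {k : ℕ | reachIn A k u v} := h2
  refine le_antisymm (Nat.sInf_le hmem) ?_
  have hlow : ∀ m ∈ {k : ℕ | reachIn A k u v}, 2 ≤ m := by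
    intro m hm
    match m, hm with
    | 0, hm => exact absurd (show u = v from hm) h0
    | 1, hm => obtain ⟨w, hw, hw0⟩ := hm; exact absurd ((show w = v from hw0) ▸ hw) h1
    | (m+2), _ => omega
  exact hlow _ (Nat.sInf_mem ⟨2, hmem⟩)

lemma ddist_Karc {n k p : ℕ} (hk1 : 1 ≤ k) (hpn : p + k + 1 ≤ n) (u v : Fin n) :
    ddist (Karc n k p) u v
      = if u = v then 0 else if p + k ≤ (u : ℕ) ∧ (v : ℕ) < p then 2 else 1 := by
  by_cases huv : u = v
  · rw [if_pos huv, huv, ddist_self]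
  · rw [if_neg huv]
    by_cases hm : p + k ≤ (u : ℕ) ∧ (v : ℕ) < p
    · rw [if_pos hm]
      refine ddist_eq_two ?_ huv ?_
      · refine ⟨⟨p, by omega⟩, ⟨?_, ?_⟩, ⟨v, ⟨?_, ?_⟩, rfl⟩⟩
        · exact Fin.ne_of_val_ne (by simp only [Fin.val_mk]; omega)
        · simp only [Fin.val_mk]; omega
        · exact Fin.ne_of_val_ne (by simp only [Fin.val_mk]; omega)
        · simp only [Fin.val_mk]; omega
      · rintro ⟨-, hcon⟩; exact hcon hm
    · rw [if_neg hm]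
      exact ddist_eq_one ⟨huv, hm⟩ huv
lemma det_key {K : Type*} [Field K] {n p k q : ℕ} (hn : n = p + k + q)
    (hp : 1 ≤ p) (hk : 1 ≤ k) (hq : 1 ≤ q)
    (A B ε : K) (hA : A ≠ 0) (hB : B ≠ 0)
    (M : Matrix (Fin n) (Fin n) K)
    (hM : ∀ i j, M i j = (if i = j then (if p + k ≤ (i : ℕ) then B else A) else 0)
        + (1 + (if p + k ≤ (i : ℕ) then ε else 0) * (if (j : ℕ) < p then 1 else 0))) :
    M.det = A ^ (p + k - 1) * B ^ (q - 1)
        * (A * B + (p + k) * B + q * A - ε * (p * q)) := by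
  classical
  set d : Fin n → K := fun i => if p + k ≤ (i : ℕ) then B else A with hd
  set U : Matrix (Fin n) (Fin 2) K :=
    fun i => ![(1 : K), if p + k ≤ (i : ℕ) then ε else 0] with hU
  set V : Matrix (Fin 2) (Fin n) K :=
    ![fun _ => (1 : K), fun j => if (j : ℕ) < p then 1 else 0] with hV
  have hU0 : ∀ i, U i 0 = 1 := fun i => rfl
  have hU1 : ∀ i, U i 1 = if p + k ≤ (i : ℕ) then ε else 0 := fun i => rfl
  have hV0 : ∀ j, V 0 j = 1 := fun j => rfl
  have hV1 : ∀ j, V 1 j = if (j : ℕ) < p then 1 else 0 := fun j => rfl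
  have hMeq : M = Matrix.diagonal d + U * V := by
    ext i j
    rw [hM i j, Matrix.add_apply, Matrix.mul_apply, Fin.sum_univ_two,
      hU0, hU1, hV0, hV1, Matrix.diagonal_apply]
    ring
  have hdnz : ∀ i, d i ≠ 0 := by
    intro i; simp only [hd]; split <;> assumption
  have hdet_d : (Matrix.diagonal d).det = A ^ (p + k) * B ^ q := by
    rw [Matrix.det_diagonal, prod_blocks_fin hn d A A B (fun i => by
      simp only [hd]
      by_cases h' : (i : ℕ) < p
      · have h : ¬ p + k ≤ (i : ℕ) := by omega
        simp [h, h']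
      · by_cases h : p + k ≤ (i : ℕ) <;> simp [h, h']), ← pow_add]
  have hunit : IsUnit (Matrix.diagonal d).det := by
    rw [hdet_d]
    exact isUnit_iff_ne_zero.mpr (mul_ne_zero (pow_ne_zero _ hA) (pow_ne_zero _ hB))
  have hinv : (Matrix.diagonal d)⁻¹ = Matrix.diagonal (fun i => (d i)⁻¹) := by
    apply Matrix.inv_eq_right_inv
    rw [Matrix.diagonal_mul_diagonal]
    rw [show (fun i => d i * (d i)⁻¹) = fun _ => (1 : K) from
      funext fun i => mul_inv_cancel₀ (hdnz i), Matrix.diagonal_one]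
  rw [hMeq, Matrix.det_add_mul U V hunit, hinv, hdet_d]
  have hW : ∀ i j, (V * Matrix.diagonal (fun i => (d i)⁻¹) * U) i j
      = ∑ a : Fin n, V i a * (d a)⁻¹ * U a j := by
    intro i j
    rw [Matrix.mul_apply]
    exact Finset.sum_congr rfl fun a _ => by rw [Matrix.mul_diagonal]
  have hS00 : ∑ a : Fin n, V 0 a * (d a)⁻¹ * U a 0
      = p * A⁻¹ + k * A⁻¹ + q * B⁻¹ := by
    refine sum_blocks_fin hn _ _ _ _ (fun a => ?_)
    beta_reduce
    rw [hV0, hU0, one_mul, mul_one]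
    simp only [hd]
    by_cases h' : (a : ℕ) < p
    · have h : ¬ p + k ≤ (a : ℕ) := by omega
      simp [h, h']
    · by_cases h : p + k ≤ (a : ℕ) <;> simp [h, h']
  have hS01 : ∑ a : Fin n, V 0 a * (d a)⁻¹ * U a 1 = q * (B⁻¹ * ε) := by
    have := sum_blocks_fin hn (fun a => V 0 a * (d a)⁻¹ * U a 1) 0 0 (B⁻¹ * ε) (fun a => by
      beta_reduce
      rw [hV0, hU1, one_mul]
      simp only [hd]
      by_cases h' : (a : ℕ) < p
      · have h : ¬ p + k ≤ (a : ℕ) := by omega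
        simp [h, h']
      · by_cases h : p + k ≤ (a : ℕ) <;> simp [h, h'])
    rw [this]; ring
  have hS10 : ∑ a : Fin n, V 1 a * (d a)⁻¹ * U a 0 = p * A⁻¹ := by
    have := sum_blocks_fin hn (fun a => V 1 a * (d a)⁻¹ * U a 0) A⁻¹ 0 0 (fun a => by
      beta_reduce
      rw [hV1, hU0, mul_one]
      simp only [hd]
      by_cases h' : (a : ℕ) < p
      · have h : ¬ p + k ≤ (a : ℕ) := by omega
        simp [h, h']
      · by_cases h : p + k ≤ (a : ℕ) <;> simp [h, h'])
    rw [this]; ring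
  have hS11 : ∑ a : Fin n, V 1 a * (d a)⁻¹ * U a 1 = 0 := by
    have := sum_blocks_fin hn (fun a => V 1 a * (d a)⁻¹ * U a 1) 0 0 0 (fun a => by
      beta_reduce
      rw [hV1, hU1]
      simp only [hd]
      by_cases h' : (a : ℕ) < p
      · have h : ¬ p + k ≤ (a : ℕ) := by omega
        simp [h, h']
      · by_cases h : p + k ≤ (a : ℕ) <;> simp [h, h'])
    rw [this]; ring
  rw [Matrix.det_fin_two]
  simp only [Matrix.add_apply, Matrix.one_apply_eq,
    Matrix.one_apply_ne (show (0 : Fin 2) ≠ 1 by decide),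
    Matrix.one_apply_ne (show (1 : Fin 2) ≠ 0 by decide)]
  rw [hW 0 0, hW 0 1, hW 1 0, hW 1 1, hS00, hS01, hS10, hS11]
  obtain ⟨a, ha⟩ : ∃ a, p + k = a + 1 := ⟨p + k - 1, by omega⟩
  obtain ⟨b, hb⟩ : ∃ b, q = b + 1 := ⟨q - 1, by omega⟩
  rw [show p + k - 1 = a from by omega, show q - 1 = b from by omega, ha, hb]
  push_cast
  field_simp
  ring
set_option maxHeartbeats 1600000 in
/-- For `1 ≤ k ≤ n-2`, `1 ≤ p ≤ n-k-1` and `q = n-p-k`, the Laplacian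
spectrum of `K⃗(n,k,p)` is `{0, n^{[p+k-1]}, (n-p)^{[q]}}` and its distance Laplacian
spectrum is `{0, n^{[p+k-1]}, (n+p)^{[q]}}`, stated via characteristic polynomials. -/
theorem lap_spectra_Karc (n k p q : ℕ) (hk1 : 1 ≤ k) (hk2 : k ≤ n - 2)
    (hp1 : 1 ≤ p) (hp2 : p ≤ n - k - 1) (hq : q = n - p - k) :
    (digraphLap (Karc n k p)).charpoly
        = X * (X - C (n : ℝ)) ^ (p + k - 1) * (X - C ((n : ℝ) - p)) ^ q ∧
    (digraphDistLap (Karc n k p)).charpoly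
        = X * (X - C (n : ℝ)) ^ (p + k - 1) * (X - C ((n : ℝ) + p)) ^ q := by
  have hn3 : 3 ≤ n := by omega
  have hn : n = p + k + q := by omega
  have hq1 : 1 ≤ q := by omega
  have hpn : p + k + 1 ≤ n := by omega
  obtain ⟨b, hb⟩ : ∃ b, q = b + 1 := ⟨q - 1, by omega⟩
  subst hb
  have hnR : (n : ℝ) = (p : ℝ) + k + (b + 1) := by rw [hn]; push_cast; ring
  -- out-degree formula
  have hdeg : ∀ u : Fin n, ((Finset.univ.filter (fun v => Karc n k p u v)).card : ℝ)
      = if p + k ≤ (u : ℕ) then (n : ℝ) - 1 - p else (n : ℝ) - 1 := by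
    intro u
    rw [Finset.card_filter]
    push_cast
    by_cases hu : p + k ≤ (u : ℕ)
    · rw [if_pos hu]
      have hpt : ∀ v : Fin n, (if Karc n k p u v then (1 : ℝ) else 0)
          = (if (v : ℕ) < p then 0 else 1) - (if v = u then 1 else 0) := by
        intro v
        by_cases hvu : v = u
        · subst hvu
          rw [if_neg (show ¬ Karc n k p v v from fun h => h.1 rfl),
            if_neg (show ¬ (v : ℕ) < p by omega), if_pos rfl]
          norm_num
        · rw [if_neg hvu]
          by_cases hv : (v : ℕ) < p
          · rw [if_neg (show ¬ Karc n k p u v from fun h => h.2 ⟨hu, hv⟩), if_pos hv]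
            norm_num
          · rw [if_pos (show Karc n k p u v from ⟨Ne.symm hvu, fun hc => hv hc.2⟩), if_neg hv]
            norm_num
      rw [Finset.sum_congr rfl (fun v _ => hpt v), Finset.sum_sub_distrib,
        sum_blocks_fin hn _ 0 1 1 (fun i => by split_ifs <;> rfl),
        Finset.sum_ite_eq' Finset.univ u (fun _ => (1 : ℝ)), if_pos (Finset.mem_univ u), hnR]
      push_cast
      ring
    · rw [if_neg hu]
      have hpt : ∀ v : Fin n, (if Karc n k p u v then (1 : ℝ) else 0)
          = 1 - (if v = u then 1 else 0) := by
        intro v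
        by_cases hvu : v = u
        · subst hvu
          rw [if_neg (show ¬ Karc n k p v v from fun h => h.1 rfl), if_pos rfl]
          norm_num
        · rw [if_pos (show Karc n k p u v from ⟨Ne.symm hvu, fun hc => hu hc.1⟩), if_neg hvu]
          norm_num
      rw [Finset.sum_congr rfl (fun v _ => hpt v), Finset.sum_sub_distrib,
        Finset.sum_const, Finset.card_univ, Fintype.card_fin,
        Finset.sum_ite_eq' Finset.univ u (fun _ => (1 : ℝ)), if_pos (Finset.mem_univ u)]
      simp [nsmul_eq_mul]
  -- transmission formula
  have htr : ∀ u : Fin n, (∑ w, (ddist (Karc n k p) u w : ℝ))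
      = if p + k ≤ (u : ℕ) then (n : ℝ) - 1 + p else (n : ℝ) - 1 := by
    intro u
    by_cases hu : p + k ≤ (u : ℕ)
    · rw [if_pos hu]
      have hpt : ∀ w : Fin n, ((ddist (Karc n k p) u w : ℕ) : ℝ)
          = (if (w : ℕ) < p then 2 else 1) - (if w = u then 1 else 0) := by
        intro w
        rw [ddist_Karc hk1 hpn]
        by_cases hwu : w = u
        · subst hwu
          rw [if_pos rfl, if_neg (show ¬ (w : ℕ) < p by omega), if_pos rfl]
          norm_num
        · rw [if_neg (fun h : u = w => hwu h.symm), if_neg hwu]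
          by_cases hw : (w : ℕ) < p
          · rw [if_pos ⟨hu, hw⟩, if_pos hw]
            norm_num
          · rw [if_neg (fun hc : p + k ≤ (u:ℕ) ∧ (w:ℕ) < p => hw hc.2), if_neg hw]
            norm_num
      rw [Finset.sum_congr rfl (fun w _ => hpt w), Finset.sum_sub_distrib,
        sum_blocks_fin hn _ 2 1 1 (fun i => by split_ifs <;> rfl),
        Finset.sum_ite_eq' Finset.univ u (fun _ => (1 : ℝ)), if_pos (Finset.mem_univ u), hnR]
      push_cast
      ring
    · rw [if_neg hu]
      have hpt : ∀ w : Fin n, ((ddist (Karc n k p) u w : ℕ) : ℝ)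
          = 1 - (if w = u then 1 else 0) := by
        intro w
        rw [ddist_Karc hk1 hpn]
        by_cases hwu : w = u
        · subst hwu
          rw [if_pos rfl, if_pos rfl]
          norm_num
        · rw [if_neg (fun h : u = w => hwu h.symm), if_neg hwu,
            if_neg (fun hc : p + k ≤ (u:ℕ) ∧ (w:ℕ) < p => hu hc.1)]
          norm_num
      rw [Finset.sum_congr rfl (fun w _ => hpt w), Finset.sum_sub_distrib,
        Finset.sum_const, Finset.card_univ, Fintype.card_fin,
        Finset.sum_ite_eq' Finset.univ u (fun _ => (1 : ℝ)), if_pos (Finset.mem_univ u)]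
      simp [nsmul_eq_mul]
  -- setup for the fraction field
  set K := FractionRing (Polynomial ℝ) with hK
  set φ := algebraMap (Polynomial ℝ) K with hφ
  have hinj : Function.Injective φ := IsFractionRing.injective (Polynomial ℝ) K
  have hXC : ∀ r : ℝ, φ ((X : ℝ[X]) - C r) ≠ 0 := fun r h =>
    Polynomial.X_sub_C_ne_zero r (hinj (h.trans (map_zero φ).symm))
  have hCn : ∀ m : ℕ, φ (C ((m : ℕ) : ℝ)) = ((m : ℕ) : K) := by
    intro m
    rw [map_natCast (C : ℝ →+* ℝ[X]) m, map_natCast]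
  have hA : φ X - ((n : ℕ) : K) ≠ 0 := by
    have h1 : φ ((X : ℝ[X]) - C ((n : ℕ) : ℝ)) = φ X - ((n : ℕ) : K) := by
      rw [map_sub, hCn]
    rw [← h1]; exact hXC _
  constructor
  · -- Laplacian part
    have hLdiag : ∀ i : Fin n, digraphLap (Karc n k p) i i
        = if p + k ≤ (i : ℕ) then (n : ℝ) - 1 - p else (n : ℝ) - 1 := by
      intro i
      simp only [digraphLap, Matrix.sub_apply, Matrix.diagonal_apply_eq, adjMat,
        if_neg (show ¬ Karc n k p i i from fun h => h.1 rfl), sub_zero]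
      exact hdeg i
    have hLoff : ∀ i j : Fin n, i ≠ j → digraphLap (Karc n k p) i j
        = -(if Karc n k p i j then (1 : ℝ) else 0) := by
      intro i j hij
      simp only [digraphLap, Matrix.sub_apply, Matrix.diagonal_apply_ne _ hij, adjMat]
      ring
    have hcmL : ∀ i j : Fin n, charmatrix (digraphLap (Karc n k p)) i j
        = (if i = j then (if p + k ≤ (i : ℕ) then X - (n : ℝ[X]) + (p : ℝ[X]) else X - (n : ℝ[X]))
            else 0)
          + (1 + (if p + k ≤ (i : ℕ) then (-1 : ℝ[X]) else 0)
              * (if (j : ℕ) < p then 1 else 0)) := by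
      intro i j
      by_cases hij : i = j
      · subst hij
        rw [charmatrix_apply_eq, hLdiag i, if_pos rfl]
        by_cases hi : p + k ≤ (i : ℕ)
        · simp only [hi, if_true, if_neg (show ¬ (i : ℕ) < p by omega), map_sub,
            Polynomial.C_1, map_natCast, mul_zero, add_zero]
          ring
        · simp only [hi, if_false, zero_mul, add_zero, map_sub, Polynomial.C_1,
            map_natCast]
          ring
      · rw [charmatrix_apply_ne _ _ _ hij, hLoff i j hij, if_neg hij]
        by_cases hc : p + k ≤ (i : ℕ) ∧ (j : ℕ) < p
        · rw [if_neg (show ¬ Karc n k p i j from fun h => h.2 hc), if_pos hc.1, if_pos hc.2]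
          simp
        · rw [if_pos (show Karc n k p i j from ⟨hij, hc⟩)]
          have hz : (if p + k ≤ (i : ℕ) then (-1 : ℝ[X]) else 0)
              * (if (j : ℕ) < p then 1 else 0) = 0 := by
            rcases not_and_or.mp hc with h | h
            · rw [if_neg h, zero_mul]
            · rw [if_neg h, mul_zero]
          rw [hz]
          simp
    apply hinj
    rw [Matrix.charpoly, RingHom.map_det, RingHom.mapMatrix_apply]
    have hB : φ X - ((n : ℕ) : K) + ((p : ℕ) : K) ≠ 0 := by
      have h1 : φ ((X : ℝ[X]) - C ((n : ℝ) - p)) = φ X - ((n : ℕ) : K) + ((p : ℕ) : K) := by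
        rw [map_sub, map_sub (C : ℝ →+* ℝ[X]), map_sub, hCn, hCn]
        ring
      rw [← h1]; exact hXC _
    have hM : ∀ i j, ((charmatrix (digraphLap (Karc n k p))).map φ) i j
        = (if i = j then (if p + k ≤ (i : ℕ) then φ X - ((n : ℕ) : K) + ((p : ℕ) : K)
            else φ X - ((n : ℕ) : K)) else 0)
          + (1 + (if p + k ≤ (i : ℕ) then (-1 : K) else 0)
              * (if (j : ℕ) < p then 1 else 0)) := by
      intro i j
      rw [Matrix.map_apply, hcmL i j]
      simp only [apply_ite φ, _root_.map_add, _root_.map_mul, _root_.map_one, map_sub,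
        map_natCast, _root_.map_neg, map_zero]
    rw [det_key hn hp1 hk1 (by omega) (φ X - ((n : ℕ) : K)) (φ X - ((n : ℕ) : K) + ((p : ℕ) : K))
      (-1) hA hB _ hM]
    simp only [_root_.map_mul, map_pow, map_sub, hCn]
    have hnK : ((n : ℕ) : K) = (p : K) + k + (b + 1) := by rw [hn]; push_cast; ring
    rw [hnK]
    simp only [Nat.add_sub_cancel, pow_succ]
    push_cast
    ring
  · -- distance Laplacian part
    have hDdiag : ∀ i : Fin n, digraphDistLap (Karc n k p) i i
        = if p + k ≤ (i : ℕ) then (n : ℝ) - 1 + p else (n : ℝ) - 1 := by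
      intro i
      simp only [digraphDistLap, Matrix.sub_apply, Matrix.diagonal_apply_eq, distMat,
        ddist_self, Nat.cast_zero, sub_zero]
      exact htr i
    have hDoff : ∀ i j : Fin n, i ≠ j → digraphDistLap (Karc n k p) i j
        = -(if p + k ≤ (i : ℕ) ∧ (j : ℕ) < p then (2 : ℝ) else 1) := by
      intro i j hij
      simp only [digraphDistLap, Matrix.sub_apply, Matrix.diagonal_apply_ne _ hij, distMat]
      rw [ddist_Karc hk1 hpn, if_neg hij]
      split_ifs <;> norm_num
    have hcmD : ∀ i j : Fin n, charmatrix (digraphDistLap (Karc n k p)) i j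
        = (if i = j then (if p + k ≤ (i : ℕ) then X - (n : ℝ[X]) - (p : ℝ[X]) else X - (n : ℝ[X]))
            else 0)
          + (1 + (if p + k ≤ (i : ℕ) then (1 : ℝ[X]) else 0)
              * (if (j : ℕ) < p then 1 else 0)) := by
      intro i j
      by_cases hij : i = j
      · subst hij
        rw [charmatrix_apply_eq, hDdiag i, if_pos rfl]
        by_cases hi : p + k ≤ (i : ℕ)
        · simp only [hi, if_true, if_neg (show ¬ (i : ℕ) < p by omega), map_add, map_sub,
            Polynomial.C_1, map_natCast, mul_zero, add_zero]
          ring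
        · simp only [hi, if_false, zero_mul, add_zero, map_add, map_sub, Polynomial.C_1,
            map_natCast]
          ring
      · rw [charmatrix_apply_ne _ _ _ hij, hDoff i j hij, if_neg hij]
        by_cases hc : p + k ≤ (i : ℕ) ∧ (j : ℕ) < p
        · rw [if_pos hc, if_pos hc.1, if_pos hc.2]
          norm_num [map_ofNat]
        · rw [if_neg hc]
          have hz : (if p + k ≤ (i : ℕ) then (1 : ℝ[X]) else 0)
              * (if (j : ℕ) < p then 1 else 0) = 0 := by
            rcases not_and_or.mp hc with h | h
            · rw [if_neg h, zero_mul]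
            · rw [if_neg h, mul_zero]
          rw [hz]
          simp
    apply hinj
    rw [Matrix.charpoly, RingHom.map_det, RingHom.mapMatrix_apply]
    have hB : φ X - ((n : ℕ) : K) - ((p : ℕ) : K) ≠ 0 := by
      have h1 : φ ((X : ℝ[X]) - C ((n : ℝ) + p)) = φ X - ((n : ℕ) : K) - ((p : ℕ) : K) := by
        rw [map_sub, map_add (C : ℝ →+* ℝ[X]), map_add, hCn, hCn]
        ring
      rw [← h1]; exact hXC _
    have hM : ∀ i j, ((charmatrix (digraphDistLap (Karc n k p))).map φ) i j
        = (if i = j then (if p + k ≤ (i : ℕ) then φ X - ((n : ℕ) : K) - ((p : ℕ) : K)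
            else φ X - ((n : ℕ) : K)) else 0)
          + (1 + (if p + k ≤ (i : ℕ) then (1 : K) else 0)
              * (if (j : ℕ) < p then 1 else 0)) := by
      intro i j
      rw [Matrix.map_apply, hcmD i j]
      simp only [apply_ite φ, _root_.map_add, _root_.map_mul, _root_.map_one, map_sub,
        map_natCast, map_zero]
    rw [det_key hn hp1 hk1 (by omega) (φ X - ((n : ℕ) : K))
      (φ X - ((n : ℕ) : K) - ((p : ℕ) : K)) 1 hA hB _ hM]
    simp only [_root_.map_mul, map_pow, map_sub, hCn]
    rw [show φ (C ((n : ℝ) + ↑p)) = ((n : ℕ) : K) + ((p : ℕ) : K) by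
      rw [map_add (C : ℝ →+* ℝ[X]), _root_.map_add, hCn, hCn]]
    have hnK : ((n : ℕ) : K) = (p : K) + k + (b + 1) := by rw [hn]; push_cast; ring
    rw [hnK]
    simp only [Nat.add_sub_cancel, pow_succ]
    push_cast
    ring
end
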